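/- arXiv:2103.02871 — 4 statements merged into one kernel-verified Lean document; each statement's English description precedes it below -/
import Mathlib

section
/- Let V be a finite-dimensional symplectic vector space over ℚ (nondegenerate alternating form), and let I, I' be two maximal isotropic subspaces. Then there exists a maximal isotropic subspace I'' of V with I'' ∩ I = 0 and I'' ∩ I' = 0. -/
/-!
Build the transverse Lagrangian one vector at a time. If `J` is isotropic, meets `I` and `I'`
trivially, and `dim J < g`, then `J^⊥ ∩ (J + I) = J + (J^⊥ ∩ I) = J + (J + I)^⊥` (modular law and
`I^⊥ = I`) has dimension `g < dim J^⊥`, and likewise for `I'`. A vector space is never the union of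
two proper subspaces, so some `v ∈ J^⊥` lies outside `J + I` and `J + I'`, and `J + ⟨v⟩` is again
isotropic and meets `I` and `I'` trivially.
-/

open Module Submodule

namespace LinearMap.BilinForm

section CommRing

variable {R M : Type*} [CommRing R] [AddCommGroup M] [Module R M] {B : LinearMap.BilinForm R M}

theorem orthogonal_sup (N L : Submodule R M) :
    B.orthogonal (N ⊔ L) = B.orthogonal N ⊓ B.orthogonal L := by
  ext x
  simp only [mem_orthogonal_iff, mem_inf, mem_sup]
  refine ⟨fun h => ⟨fun n hn => h n ⟨n, hn, 0, L.zero_mem, add_zero n⟩,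
    fun l hl => h l ⟨0, N.zero_mem, l, hl, zero_add l⟩⟩, ?_⟩
  rintro ⟨hN, hL⟩ _ ⟨n, hn, l, hl, rfl⟩
  rw [map_add, LinearMap.add_apply, hN n hn, hL l hl, add_zero]

theorem sup_le_orthogonal_sup (hB : B.IsRefl) {N L : Submodule R M}
    (hN : N ≤ B.orthogonal N) (hL : L ≤ B.orthogonal L) (hNL : L ≤ B.orthogonal N) :
    N ⊔ L ≤ B.orthogonal (N ⊔ L) := by
  rw [orthogonal_sup]
  exact sup_le (le_inf hN ((le_orthogonal_orthogonal hB).trans (orthogonal_le hNL)))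
    (le_inf hNL hL)

theorem span_singleton_le_orthogonal_self (hB : B.IsAlt) (v : M) :
    R ∙ v ≤ B.orthogonal (R ∙ v) := by
  intro x hx
  rw [mem_orthogonal_iff]
  intro y hy
  obtain ⟨a, rfl⟩ := mem_span_singleton.mp hy
  obtain ⟨b, rfl⟩ := mem_span_singleton.mp hx
  simp [hB v]

end CommRing

variable {K V : Type*} [Field K] [AddCommGroup V] [Module K V] [FiniteDimensional K V]
  {B : LinearMap.BilinForm K V}

theorem orthogonal_eq_self_of_finrank_eq (hB : B.Nondegenerate) {L : Submodule K V}
    (hL : L ≤ B.orthogonal L) (hdim : finrank K V = 2 * finrank K L) :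
    B.orthogonal L = L :=
  (eq_of_le_of_finrank_le hL (by rw [finrank_orthogonal hB]; omega)).symm

theorem not_orthogonal_le_sup (hB : B.Nondegenerate) {J L : Submodule K V}
    (hJ : J ≤ B.orthogonal J) (hL : B.orthogonal L = L) (hdim : finrank K V = 2 * finrank K L)
    (hJL : Disjoint J L) (hlt : finrank K J < finrank K L) :
    ¬ B.orthogonal J ≤ J ⊔ L := by
  intro hle
  have hmodular : B.orthogonal J = J ⊔ B.orthogonal (J ⊔ L) := by
    conv_rhs => rw [orthogonal_sup, hL, inf_comm, ← sup_inf_assoc_of_le L hJ]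
    exact (inf_eq_right.mpr hle).symm
  have hJL_dim : finrank K ↥(J ⊔ L) = finrank K J + finrank K L := by
    have := finrank_sup_add_finrank_inf_eq J L
    rwa [hJL.eq_bot, finrank_bot, add_zero] at this
  have := finrank_add_le_finrank_add_finrank J (B.orthogonal (J ⊔ L))
  rw [← hmodular, finrank_orthogonal hB, finrank_orthogonal hB, hJL_dim] at this
  omega

end LinearMap.BilinForm

theorem Submodule.disjoint_sup_span_singleton {K V : Type*} [Field K] [AddCommGroup V]
    [Module K V] {J L : Submodule K V} {v : V} (hJL : Disjoint J L) (hv : v ∉ J ⊔ L) :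
    Disjoint (J ⊔ K ∙ v) L :=
  (hJL.symm.disjoint_sup_right_of_disjoint_sup_left
    (disjoint_span_singleton_of_notMem (by rwa [sup_comm]))).symm

section Lagrangian

open LinearMap.BilinForm

variable {K V : Type*} [Field K] [AddCommGroup V] [Module K V] [FiniteDimensional K V]
  {B : LinearMap.BilinForm K V}

theorem exists_isotropic_disjoint_finrank_succ (hB : B.IsAlt) (hnd : B.Nondegenerate)
    {n : ℕ} (hdim : finrank K V = 2 * n) {L L' : Submodule K V}
    (hL : L ≤ B.orthogonal L) (hL' : L' ≤ B.orthogonal L')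
    (hLdim : finrank K L = n) (hL'dim : finrank K L' = n)
    {J : Submodule K V} (hJ : J ≤ B.orthogonal J) (hJL : Disjoint J L) (hJL' : Disjoint J L')
    (hlt : finrank K J < n) :
    ∃ J' : Submodule K V, J' ≤ B.orthogonal J' ∧ Disjoint J' L ∧ Disjoint J' L' ∧
      finrank K J' = finrank K J + 1 := by
  have hcover : ¬ (B.orthogonal J : Set V) ⊆ ↑(J ⊔ L) ∪ ↑(J ⊔ L') := by
    rw [AddSubgroupClass.subset_union, not_or]
    exact ⟨not_orthogonal_le_sup hnd hJ (orthogonal_eq_self_of_finrank_eq hnd hL (by omega))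
        (by omega) hJL (by omega),
      not_orthogonal_le_sup hnd hJ (orthogonal_eq_self_of_finrank_eq hnd hL' (by omega))
        (by omega) hJL' (by omega)⟩
  obtain ⟨v, hvJ, hv⟩ := Set.not_subset.mp hcover
  rw [Set.mem_union, not_or] at hv
  obtain ⟨hvL, hvL'⟩ := hv
  refine ⟨J ⊔ K ∙ v, sup_le_orthogonal_sup hB.isRefl hJ (span_singleton_le_orthogonal_self hB v)
      ((span_singleton_le_iff_mem v _).mpr hvJ),
    disjoint_sup_span_singleton hJL hvL, disjoint_sup_span_singleton hJL' hvL',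
    finrank_sup_span_singleton fun hv => hvL (mem_sup_left hv)⟩

theorem exists_isotropic_disjoint_finrank_eq (hB : B.IsAlt) (hnd : B.Nondegenerate)
    {n : ℕ} (hdim : finrank K V = 2 * n) {L L' : Submodule K V}
    (hL : L ≤ B.orthogonal L) (hL' : L' ≤ B.orthogonal L')
    (hLdim : finrank K L = n) (hL'dim : finrank K L' = n) {k : ℕ} (hk : k ≤ n) :
    ∃ J : Submodule K V, J ≤ B.orthogonal J ∧ Disjoint J L ∧ Disjoint J L' ∧
      finrank K J = k := by
  induction k with
  | zero => exact ⟨⊥, bot_le, disjoint_bot_left, disjoint_bot_left, finrank_bot K V⟩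
  | succ k ih =>
    obtain ⟨J, hJ, hJL, hJL', rfl⟩ := ih (by omega)
    exact exists_isotropic_disjoint_finrank_succ hB hnd hdim hL hL' hLdim hL'dim hJ hJL hJL' hk

end Lagrangian

/-- Given two Lagrangians `I, I'` of a symplectic `ℚ`-vector space, there is a
third Lagrangian `I''` transverse to both. -/
theorem exists_lagrangian_transverse_to_two
    (V : Type*) [AddCommGroup V] [Module ℚ V] [FiniteDimensional ℚ V] (g : ℕ)
    (B : V →ₗ[ℚ] V →ₗ[ℚ] ℚ) (halt : B.IsAlt) (hnd : B.Nondegenerate)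
    (hdim : finrank ℚ V = 2 * g)
    (I I' : Submodule ℚ V)
    (hI : ∀ x ∈ I, ∀ y ∈ I, B x y = 0) (hI' : ∀ x ∈ I', ∀ y ∈ I', B x y = 0)
    (hIdim : finrank ℚ I = g) (hI'dim : finrank ℚ I' = g) :
    ∃ I'' : Submodule ℚ V,
      (∀ x ∈ I'', ∀ y ∈ I'', B x y = 0) ∧
      finrank ℚ I'' = g ∧ I'' ⊓ I = ⊥ ∧ I'' ⊓ I' = ⊥ := by
  obtain ⟨J, hJ, hJI, hJI', hJdim⟩ :=
    exists_isotropic_disjoint_finrank_eq (B := B) halt hnd hdim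
      (fun y hy x hx => hI x hx y hy) (fun y hy x hx => hI' x hx y hy) hIdim hI'dim le_rfl
  exact ⟨J, fun x hx y hy => hJ hy x hx, hJdim, hJI.eq_bot, hJI'.eq_bot⟩
end

section
/- Let G be an abelian group and A, B subgroups of G such that A, B and A ∩ B are all divisible. Then the torsion subgroup of A + B equals the sum of the torsion subgroups of A and B: (A + B)_tor = A_tor + B_tor. -/
/-! If `a + b` is killed by `n`, then `n • a = -(n • b)` lies in `A ⊓ B`; divisibility of `A ⊓ B`
gives `c ∈ A ⊓ B` with `n • c = n • a`, and `a + b = (a - c) + (b + c)` splits `a + b` into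
summands in `A` and `B` that are both killed by `n`. -/

namespace AddSubgroup

variable {G : Type*} [AddCommGroup G] {A B : AddSubgroup G} {a b : G}

theorem nsmul_mem_inf_of_nsmul_add_eq_zero (ha : a ∈ A) (hb : b ∈ B) {n : ℕ}
    (hn : n • (a + b) = 0) : n • a ∈ A ⊓ B := by
  have hab : n • a = -(n • b) := by
    rw [smul_add] at hn
    exact eq_neg_of_add_eq_zero_left hn
  exact ⟨A.nsmul_mem ha n, hab ▸ B.neg_mem (B.nsmul_mem hb n)⟩

theorem exists_nsmul_eq_zero_add_eq_of_nsmul_add_eq_zero (ha : a ∈ A) (hb : b ∈ B) {n : ℕ}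
    (hn : n • (a + b) = 0) (hdiv : ∃ c ∈ A ⊓ B, n • c = n • a) :
    ∃ a' ∈ A, ∃ b' ∈ B, n • a' = 0 ∧ n • b' = 0 ∧ a + b = a' + b' := by
  obtain ⟨c, ⟨hcA, hcB⟩, hnc⟩ := hdiv
  refine ⟨a - c, A.sub_mem ha hcA, b + c, B.add_mem hb hcB, ?_, ?_, by abel⟩
  · rw [smul_sub, hnc, sub_self]
  · rw [smul_add, hnc, ← smul_add, add_comm, hn]

end AddSubgroup

theorem torsion_of_sum_of_divisible_subgroups_general
    {G : Type*} [AddCommGroup G] (A B : AddSubgroup G)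
    (hAB : ∀ x ∈ A ⊓ B, ∀ n : ℕ, 0 < n → ∃ y ∈ A ⊓ B, n • y = x) :
    {x : G | x ∈ A ⊔ B ∧ IsOfFinAddOrder x} =
      {x : G | ∃ a ∈ A, ∃ b ∈ B,
        IsOfFinAddOrder a ∧ IsOfFinAddOrder b ∧ x = a + b} := by
  ext x
  constructor
  · rintro ⟨hx, hfin⟩
    obtain ⟨a, ha, b, hb, rfl⟩ := AddSubgroup.mem_sup.1 hx
    obtain ⟨n, hn, hn0⟩ := isOfFinAddOrder_iff_nsmul_eq_zero.1 hfin
    obtain ⟨a', ha', b', hb', ha'0, hb'0, hsum⟩ :=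
      AddSubgroup.exists_nsmul_eq_zero_add_eq_of_nsmul_add_eq_zero ha hb hn0
        (hAB _ (AddSubgroup.nsmul_mem_inf_of_nsmul_add_eq_zero ha hb hn0) n hn)
    exact ⟨a', ha', b', hb', isOfFinAddOrder_iff_nsmul_eq_zero.2 ⟨n, hn, ha'0⟩,
      isOfFinAddOrder_iff_nsmul_eq_zero.2 ⟨n, hn, hb'0⟩, hsum⟩
  · rintro ⟨a, ha, b, hb, hfa, hfb, rfl⟩
    exact ⟨AddSubgroup.add_mem_sup ha hb, hfa.add hfb⟩

/-- If `A`, `B` and `A ∩ B` are divisible subgroups of an abelian group `G`,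
then the torsion subgroup of `A + B` is the sum of the torsion subgroups of `A` and `B`. -/
theorem torsion_of_sum_of_divisible_subgroups
    {G : Type*} [AddCommGroup G] (A B : AddSubgroup G)
    (hA : ∀ x ∈ A, ∀ n : ℕ, 0 < n → ∃ y ∈ A, n • y = x)
    (hB : ∀ x ∈ B, ∀ n : ℕ, 0 < n → ∃ y ∈ B, n • y = x)
    (hAB : ∀ x ∈ A ⊓ B, ∀ n : ℕ, 0 < n → ∃ y ∈ A ⊓ B, n • y = x) :
    {x : G | x ∈ A ⊔ B ∧ IsOfFinAddOrder x} =
      {x : G | ∃ a ∈ A, ∃ b ∈ B,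
        IsOfFinAddOrder a ∧ IsOfFinAddOrder b ∧ x = a + b} :=
  torsion_of_sum_of_divisible_subgroups_general A B hAB
end

section
/- Let (V, b) be a nondegenerate symmetric bilinear space over ℚ of Witt index at least 2, and let v, w be nonzero isotropic vectors. Then there exists a subspace W ⊆ V with v, w ∈ W, dim W ≤ 5, such that the restriction of b to W is nondegenerate and W contains two isotropic vectors with nonzero pairing. -/
/-!
A nonzero isotropic `v` has a partner `f` with `B v f = 1`, `B f f = 0` (using `1/2` to correct
an arbitrary partner), so `H = span {v, f}` is a hyperbolic plane. Projecting away from `H`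
splits off `V = H ⊕ Hᗮ`, and `Hᗮ` is again nondegenerate. The component of `w` in `Hᗮ` lies in a
nondegenerate subspace of `Hᗮ` of dimension at most two (a line if it is anisotropic, a
hyperbolic plane otherwise), and its orthogonal sum with `H` is a nondegenerate subspace of
dimension at most four containing `v` and `w`.
-/

open Module Submodule

theorem finrank_span_four_le {K V : Type*} [DivisionRing K] [AddCommGroup V] [Module K V]
    (a b c d : V) : finrank K (span K {a, b, c, d}) ≤ 4 := by
  classical
  have hcard := finrank_span_finset_le_card (R := K) ({a, b, c, d} : Finset V)
  rw [Set.finrank, Finset.coe_insert, Finset.coe_insert, Finset.coe_insert,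
    Finset.coe_singleton] at hcard
  exact hcard.trans Finset.card_le_four

namespace LinearMap.BilinForm

variable {K V : Type*} [Field K] [AddCommGroup V] [Module K V] (B : LinearMap.BilinForm K V)

def NondegenerateOn (W : Submodule K V) : Prop :=
  ∀ x ∈ W, (∀ y ∈ W, B x y = 0) → x = 0

variable {B}

theorem exists_isotropic_partner [NeZero (2 : K)] (hB : B.IsSymm) {z u : V}
    (hz : B z z = 0) (hu : B z u ≠ 0) :
    ∃ u' ∈ span K {z, u}, B z u' = 1 ∧ B u' u' = 0 := by
  set u₁ := (B z u)⁻¹ • u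
  have hzu₁ : B z u₁ = 1 := by simp [u₁, inv_mul_cancel₀ hu]
  refine ⟨u₁ - (B u₁ u₁ / 2) • z, ?_, by simp [hzu₁, hz], ?_⟩
  · exact sub_mem (smul_mem _ _ (subset_span (by simp))) (smul_mem _ _ (subset_span (by simp)))
  · have hu₁z : B u₁ z = 1 := hB.eq u₁ z ▸ hzu₁
    simp only [map_sub, map_smul, LinearMap.sub_apply, LinearMap.smul_apply, smul_eq_mul,
      hzu₁, hu₁z, hz]
    field_simp
    ring

theorem nondegenerateOn_span_singleton {z : V} (hz : B z z ≠ 0) :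
    B.NondegenerateOn (K ∙ z) := by
  intro x hx hxz
  obtain ⟨a, rfl⟩ := mem_span_singleton.1 hx
  have : a * B z z = 0 := by simpa using hxz z (mem_span_singleton_self z)
  simp [(mul_eq_zero.1 this).resolve_right hz]

theorem nondegenerateOn_span_hyperbolic (hB : B.IsSymm) {e f : V}
    (he : B e e = 0) (hf : B f f = 0) (hef : B e f = 1) :
    B.NondegenerateOn (span K {e, f}) := by
  have hfe : B f e = 1 := hB.eq f e ▸ hef
  intro x hx hxH
  obtain ⟨a, b, rfl⟩ := mem_span_pair.1 hx
  have hb := hxH e (subset_span (by simp))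
  have ha := hxH f (subset_span (by simp))
  simp only [map_add, map_smul, LinearMap.add_apply, LinearMap.smul_apply, smul_eq_mul,
    he, hf, hef, hfe, mul_zero, mul_one, zero_add, add_zero] at ha hb
  simp [ha, hb]

theorem span_hyperbolic_sup_orthogonal_eq_top (hB : B.IsSymm) {e f : V}
    (he : B e e = 0) (hf : B f f = 0) (hef : B e f = 1) :
    span K {e, f} ⊔ B.orthogonal (span K {e, f}) = ⊤ := by
  have hfe : B f e = 1 := hB.eq f e ▸ hef
  refine eq_top_iff.2 fun x _ ↦ ?_
  have hproj : x - (B f x • e + B e x • f) ∈ B.orthogonal (span K {e, f}) := by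
    refine mem_orthogonal_iff.2 fun n hn ↦ ?_
    obtain ⟨a, b, rfl⟩ := mem_span_pair.1 hn
    simp only [map_add, map_smul, map_sub, LinearMap.add_apply, LinearMap.smul_apply,
      smul_eq_mul, he, hf, hef, hfe]
    ring
  have hmem : B f x • e + B e x • f ∈ span K {e, f} := mem_span_pair.2 ⟨_, _, rfl⟩
  simpa using add_mem_sup hmem hproj

theorem nondegenerateOn_orthogonal_of_sup_eq_top (hB : B.IsSymm) (hnd : B.SeparatingLeft)
    {H : Submodule K V} (hH : H ⊔ B.orthogonal H = ⊤) :
    B.NondegenerateOn (B.orthogonal H) := by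
  intro x hx hxH
  refine hnd x fun y ↦ ?_
  obtain ⟨h, hh, o, ho, rfl⟩ := mem_sup.1 (hH ▸ mem_top : y ∈ H ⊔ B.orthogonal H)
  rw [map_add, hB.eq x h, mem_orthogonal_iff.1 hx h hh, hxH o ho, add_zero]

theorem NondegenerateOn.sup (hB : B.IsSymm) {W₁ W₂ : Submodule K V}
    (h₁ : B.NondegenerateOn W₁) (h₂ : B.NondegenerateOn W₂) (h₁₂ : W₂ ≤ B.orthogonal W₁) :
    B.NondegenerateOn (W₁ ⊔ W₂) := by
  intro x hx hxW
  obtain ⟨a, ha, b, hb, rfl⟩ := mem_sup.1 hx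
  have hb_ortho : ∀ y ∈ W₁, B b y = 0 := fun y hy ↦ hB.eq b y ▸ h₁₂ hb y hy
  have ha_ortho : ∀ y ∈ W₂, B a y = 0 := fun y hy ↦ h₁₂ hy a ha
  have ha0 : a = 0 := h₁ a ha fun y hy ↦ by
    simpa [hb_ortho y hy] using hxW y (mem_sup_left hy)
  have hb0 : b = 0 := h₂ b hb fun y hy ↦ by
    simpa [ha_ortho y hy] using hxW y (mem_sup_right hy)
  rw [ha0, hb0, add_zero]

theorem NondegenerateOn.exists_span_pair [NeZero (2 : K)] (hB : B.IsSymm) {U : Submodule K V}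
    (hU : B.NondegenerateOn U) {z : V} (hz : z ∈ U) :
    ∃ z' ∈ U, B.NondegenerateOn (span K {z, z'}) := by
  by_cases hz0 : z = 0
  · refine ⟨0, U.zero_mem, ?_⟩
    simp [hz0, NondegenerateOn]
  obtain ⟨u, hu, hzu⟩ : ∃ u ∈ U, B z u ≠ 0 := by
    by_contra! h
    exact hz0 (hU z hz h)
  by_cases hzz : B z z = 0
  · obtain ⟨z', hz', hzz', hz'z'⟩ := exists_isotropic_partner hB hzz hzu
    have hspan : span K {z, u} ≤ U := span_le.2 (Set.insert_subset hz (by simpa using hu))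
    exact ⟨z', hspan hz', nondegenerateOn_span_hyperbolic hB hzz hz'z' hzz'⟩
  · exact ⟨z, hz, by simpa using nondegenerateOn_span_singleton hzz⟩

end LinearMap.BilinForm

open LinearMap.BilinForm in
theorem isotropic_vectors_in_small_nondegenerate_subspace_general
    (V : Type*) [AddCommGroup V] [Module ℚ V]
    (B : V →ₗ[ℚ] V →ₗ[ℚ] ℚ) (hsymm : ∀ x y, B x y = B y x) (hnd : B.Nondegenerate)
    (v w : V) (hv : v ≠ 0) (hviso : B v v = 0) :
    ∃ W : Submodule ℚ V, v ∈ W ∧ w ∈ W ∧ finrank ℚ W ≤ 5 ∧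
      (∀ x ∈ W, (∀ y ∈ W, B x y = 0) → x = 0) ∧
      ∃ e ∈ W, ∃ f ∈ W, B e e = 0 ∧ B f f = 0 ∧ B e f ≠ 0 := by
  have hB : IsSymm B := ⟨hsymm⟩
  obtain ⟨u, hu⟩ : ∃ u, B v u ≠ 0 := by
    by_contra! h
    exact hv (hnd.1 v h)
  obtain ⟨f, -, hvf, hf⟩ := exists_isotropic_partner hB hviso hu
  have hH := span_hyperbolic_sup_orthogonal_eq_top hB hviso hf hvf
  obtain ⟨w₁, hw₁, w₂, hw₂, rfl⟩ := mem_sup.1 (hH ▸ mem_top : w ∈ _ ⊔ _)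
  obtain ⟨z, hz, hndz⟩ :=
    (nondegenerateOn_orthogonal_of_sup_eq_top hB hnd.1 hH).exists_span_pair hB hw₂
  have hW : span ℚ {v, f, w₂, z} = span ℚ {v, f} ⊔ span ℚ {w₂, z} := by
    rw [← span_union, Set.insert_union, Set.singleton_union]
  refine ⟨span ℚ {v, f, w₂, z}, subset_span (by simp), ?_, ?_, ?_,
    v, subset_span (by simp), f, subset_span (by simp), hviso, hf, by simp [hvf]⟩
  · exact hW ▸ add_mem_sup hw₁ (subset_span (by simp))
  · exact (finrank_span_four_le v f w₂ z).trans (by norm_num)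
  · rw [hW]
    exact (nondegenerateOn_span_hyperbolic hB hviso hf hvf).sup hB hndz
      (span_le.2 (Set.insert_subset hw₂ (by simpa using hz)))

/-- In a nondegenerate symmetric bilinear space over `ℚ` of Witt index at
least 2, any two nonzero isotropic vectors `v, w` are contained in a nondegenerate subspace
`W` of dimension at most 5 containing two isotropic vectors with nonzero pairing. -/
theorem isotropic_vectors_in_small_nondegenerate_subspace
    (V : Type*) [AddCommGroup V] [Module ℚ V] [FiniteDimensional ℚ V]
    (B : V →ₗ[ℚ] V →ₗ[ℚ] ℚ) (hsymm : ∀ x y, B x y = B y x) (hnd : B.Nondegenerate)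
    -- Witt index at least 2: there is a 2-dimensional totally isotropic subspace
    (hwitt : ∃ W₀ : Submodule ℚ V, finrank ℚ W₀ = 2 ∧ ∀ x ∈ W₀, ∀ y ∈ W₀, B x y = 0)
    (v w : V) (hv : v ≠ 0) (hw : w ≠ 0) (hviso : B v v = 0) (hwiso : B w w = 0) :
    ∃ W : Submodule ℚ V, v ∈ W ∧ w ∈ W ∧ finrank ℚ W ≤ 5 ∧
      (∀ x ∈ W, (∀ y ∈ W, B x y = 0) → x = 0) ∧
      ∃ e ∈ W, ∃ f ∈ W, B e e = 0 ∧ B f f = 0 ∧ B e f ≠ 0 :=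
  isotropic_vectors_in_small_nondegenerate_subspace_general V B hsymm hnd v w hv hviso
end

section
/- Let G be an abelian group, let A₁, …, A_N be divisible subgroups of G such that all pairwise and iterated intersections of partial sums are divisible (it suffices to assume that A₁ + ⋯ + A_N is divisible and (A₁ + ⋯ + A_{i}) ∩ A_{i+1} is divisible for each i), and let a₁, …, a_N be torsion elements of G. Then the subgroup of G generated by the union of the sets (A_i)_tor + a_i (for i = 1, …, N) equals (A₁ + ⋯ + A_N)_tor + ⟨a₁, …, a_N⟩. -/
/-!
If `A ⊓ B` is divisible, a torsion element `u + v` of `A ⊔ B` with `n • (u + v) = 0` can be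
re-split into torsion parts: `n • u = -(n • v)` lies in `A ⊓ B`, so it equals `n • w` for some
`w ∈ A ⊓ B`, and `u + v = (u - w) + (w + v)` with both summands killed by `n`. Adding the `Aᵢ`
one at a time gives `(A₁ + ⋯ + A_N)_tor = (A₁)_tor + ⋯ + (A_N)_tor`. On the other side, the
subgroup generated by the translates `(Aᵢ)_tor + aᵢ` contains each `aᵢ` (translate `0`), hence
is `(A₁)_tor + ⋯ + (A_N)_tor + ⟨a₁, …, a_N⟩`.
-/

open AddCommGroup (torsion)

namespace AddSubgroup

variable {G : Type*} [AddCommGroup G]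

def IsDivisible (H : AddSubgroup G) : Prop :=
  ∀ x ∈ H, ∀ n : ℕ, 0 < n → ∃ y ∈ H, n • y = x

theorem sup_inf_torsion_of_isDivisible_inf {A B : AddSubgroup G} (hAB : (A ⊓ B).IsDivisible) :
    (A ⊔ B) ⊓ torsion G = A ⊓ torsion G ⊔ B ⊓ torsion G := by
  refine le_antisymm ?_ (sup_le (inf_le_inf_right _ le_sup_left) (inf_le_inf_right _ le_sup_right))
  rintro _ ⟨hx, htor⟩
  obtain ⟨u, hu, v, hv, rfl⟩ := mem_sup.1 hx
  obtain ⟨n, hn, hnuv⟩ := isOfFinAddOrder_iff_nsmul_eq_zero.1 htor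
  rw [smul_add] at hnuv
  have hnu : n • u ∈ A ⊓ B :=
    ⟨A.nsmul_mem hu n, eq_neg_of_add_eq_zero_left hnuv ▸ B.neg_mem (B.nsmul_mem hv n)⟩
  obtain ⟨w, hw, hnw⟩ := hAB _ hnu n hn
  have hA : u - w ∈ A ⊓ torsion G := ⟨A.sub_mem hu hw.1,
    isOfFinAddOrder_iff_nsmul_eq_zero.2 ⟨n, hn, by rw [smul_sub, hnw, sub_self]⟩⟩
  have hB : w + v ∈ B ⊓ torsion G := ⟨B.add_mem hw.2 hv,
    isOfFinAddOrder_iff_nsmul_eq_zero.2 ⟨n, hn, by rw [smul_add, hnw, hnuv]⟩⟩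
  exact mem_sup.2 ⟨_, hA, _, hB, by abel⟩

theorem biSup_inf_torsion_of_isLowerSet {ι : Type*} [LinearOrder ι] {A : ι → AddSubgroup G}
    (hdiv : ∀ i, ((⨆ j, ⨆ _ : j < i, A j) ⊓ A i).IsDivisible)
    (s : Finset ι) (hs : IsLowerSet (s : Set ι)) :
    (⨆ i ∈ s, A i) ⊓ torsion G = ⨆ i ∈ s, A i ⊓ torsion G := by
  classical
  induction s using Finset.induction_on_max with
  | empty => simp
  | insert a s hlt ih =>
    have hs_eq : ∀ j, j ∈ s ↔ j < a := fun j =>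
      ⟨hlt j, fun hj => (Finset.mem_insert.1 (hs hj.le (s.mem_insert_self a))).resolve_left hj.ne⟩
    have hs_lower : IsLowerSet (s : Set ι) := fun x y hyx hx =>
      (hs_eq y).2 (hyx.trans_lt ((hs_eq x).1 hx))
    have hdiv_a : (A a ⊓ ⨆ j ∈ s, A j).IsDivisible := by
      simpa only [inf_comm, hs_eq] using hdiv a
    rw [Finset.iSup_insert, Finset.iSup_insert, sup_inf_torsion_of_isDivisible_inf hdiv_a,
      ih hs_lower]

theorem iSup_inf_torsion {ι : Type*} [LinearOrder ι] [Fintype ι] {A : ι → AddSubgroup G}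
    (hdiv : ∀ i, ((⨆ j, ⨆ _ : j < i, A j) ⊓ A i).IsDivisible) :
    (⨆ i, A i) ⊓ torsion G = ⨆ i, A i ⊓ torsion G := by
  simpa using biSup_inf_torsion_of_isLowerSet hdiv Finset.univ (by simpa using isLowerSet_univ)

theorem closure_iUnion_image_add_const {ι : Type*} (B : ι → AddSubgroup G) (a : ι → G) :
    closure (⋃ i, (fun t => t + a i) '' (B i : Set G)) = (⨆ i, B i) ⊔ closure (Set.range a) := by
  set C := closure (⋃ i, (fun t => t + a i) '' (B i : Set G))
  have hmem : ∀ i, ∀ t ∈ B i, t + a i ∈ C := fun i t ht =>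
    subset_closure (Set.mem_iUnion.2 ⟨i, t, ht, rfl⟩)
  have ha : ∀ i, a i ∈ C := fun i => by simpa using hmem i 0 (B i).zero_mem
  refine le_antisymm (closure_le _ |>.2 ?_) (sup_le (iSup_le fun i t ht => ?_) ?_)
  · simp only [Set.iUnion_subset_iff, Set.image_subset_iff]
    exact fun i t ht => mem_sup.2 ⟨t, mem_iSup_of_mem i ht, a i, subset_closure ⟨i, rfl⟩, rfl⟩
  · simpa using C.sub_mem (hmem i t ht) (ha i)
  · exact closure_le _ |>.2 (Set.range_subset_iff.2 ha)

end AddSubgroup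

theorem subgroup_generated_by_translated_torsion_parts_general
    {G : Type*} [AddCommGroup G] (N : ℕ) (A : Fin N → AddSubgroup G) (a : Fin N → G)
    (hdivInt : ∀ i : Fin N, ∀ x ∈ (⨆ j : Fin N, ⨆ _ : j < i, A j) ⊓ A i,
      ∀ n : ℕ, 0 < n → ∃ y ∈ (⨆ j : Fin N, ⨆ _ : j < i, A j) ⊓ A i, n • y = x) :
    ∀ x : G,
      x ∈ AddSubgroup.closure
            (⋃ i : Fin N, (fun t => t + a i) '' {t : G | t ∈ A i ∧ IsOfFinAddOrder t}) ↔
        ∃ t : G, (t ∈ ⨆ i, A i) ∧ IsOfFinAddOrder t ∧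
          ∃ c ∈ AddSubgroup.closure (Set.range a), x = t + c := by
  have hclosure :
      AddSubgroup.closure (⋃ i, (fun t => t + a i) '' {t : G | t ∈ A i ∧ IsOfFinAddOrder t}) =
        (⨆ i, A i) ⊓ torsion G ⊔ AddSubgroup.closure (Set.range a) := by
    rw [AddSubgroup.iSup_inf_torsion hdivInt]
    exact AddSubgroup.closure_iUnion_image_add_const (fun i => A i ⊓ torsion G) a
  intro x
  rw [hclosure, AddSubgroup.mem_sup]
  simp only [AddSubgroup.mem_inf, AddCommGroup.mem_torsion, and_assoc, eq_comm]

/-- Let `A₁, …, A_N` be divisible subgroups of an abelian group `G` such that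
the sum `A₁ + ⋯ + A_N` and each intersection `(A₁ + ⋯ + Aᵢ) ∩ A_{i+1}` are divisible, and
let `a₁, …, a_N` be torsion elements of `G`. Then the subgroup generated by the union of the
translated torsion sets `(Aᵢ)_tor + aᵢ` equals `(A₁ + ⋯ + A_N)_tor + ⟨a₁, …, a_N⟩`. -/
theorem subgroup_generated_by_translated_torsion_parts
    {G : Type*} [AddCommGroup G] (N : ℕ) (A : Fin N → AddSubgroup G) (a : Fin N → G)
    (hdivA : ∀ i, ∀ x ∈ A i, ∀ n : ℕ, 0 < n → ∃ y ∈ A i, n • y = x)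
    (hdivSum : ∀ x ∈ ⨆ i, A i, ∀ n : ℕ, 0 < n → ∃ y ∈ ⨆ i, A i, n • y = x)
    (hdivInt : ∀ i : Fin N, ∀ x ∈ (⨆ j : Fin N, ⨆ _ : j < i, A j) ⊓ A i,
      ∀ n : ℕ, 0 < n → ∃ y ∈ (⨆ j : Fin N, ⨆ _ : j < i, A j) ⊓ A i, n • y = x)
    (ha : ∀ i, IsOfFinAddOrder (a i)) :
    ∀ x : G,
      x ∈ AddSubgroup.closure
            (⋃ i : Fin N, (fun t => t + a i) '' {t : G | t ∈ A i ∧ IsOfFinAddOrder t}) ↔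
        ∃ t : G, (t ∈ ⨆ i, A i) ∧ IsOfFinAddOrder t ∧
          ∃ c ∈ AddSubgroup.closure (Set.range a), x = t + c :=
  subgroup_generated_by_translated_torsion_parts_general N A a hdivInt
end
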